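/- For the Laurent polynomial P(t) = t^2 + t + 1 + t^{-1} + 2t^{-2} over 𝔽₃, the constant term of P(t)^n is nonzero in 𝔽₃ for all n with 0 ≤ n < 9 = 3^2, yet there exists some n with ct(P^n) = 0 in 𝔽₃. -/

import Mathlib

/-!
Multiplying by `t²` turns `P` into the polynomial `q = X⁴ + X³ + X² + X + 2`, so
`ct(P^n) = [X^{2n}] q^n`. These coefficients are evaluated by the kernel through list
arithmetic that is proved to agree with polynomial arithmetic: `[X^{2n}] q^n` is `1, 1, 1, 1, 1, 1,
1, 1, 2` for `n < 9`, and first vanishes at `n = 23`.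
-/

open LaurentPolynomial

noncomputable def P : LaurentPolynomial (ZMod 3) := T 2 + T 1 + 1 + T (-1) + 2 * T (-2)

open Polynomial

namespace CoeffList

variable {R : Type*} [Semiring R]

def add : List R → List R → List R
  | [], m => m
  | l, [] => l
  | a :: l, b :: m => (a + b) :: add l m

def mul : List R → List R → List R
  | [], _ => []
  | a :: l, m => add (m.map (a * ·)) (0 :: mul l m)

def pow (l : List R) : ℕ → List R
  | 0 => [1]
  | n + 1 => mul (pow l n) l

noncomputable def toPolynomial : List R → R[X]
  | [] => 0
  | a :: l => Polynomial.C a + X * toPolynomial l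

@[simp] theorem toPolynomial_nil : toPolynomial ([] : List R) = 0 := rfl

@[simp] theorem toPolynomial_cons (a : R) (l : List R) :
    toPolynomial (a :: l) = Polynomial.C a + X * toPolynomial l := rfl

theorem toPolynomial_add (l m : List R) :
    toPolynomial (add l m) = toPolynomial l + toPolynomial m := by
  induction l, m using add.induct with
  | case1 m => simp [add]
  | case2 l hl => cases l <;> simp_all [add]
  | case3 a l b m ih =>
    simp only [add, toPolynomial_cons, ih, map_add, mul_add]
    abel

theorem toPolynomial_map_mul (a : R) (l : List R) :
    toPolynomial (l.map (a * ·)) = Polynomial.C a * toPolynomial l := by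
  induction l with
  | nil => simp
  | cons b l ih =>
    rw [List.map_cons, toPolynomial_cons, toPolynomial_cons, ih, map_mul, mul_add, ← mul_assoc,
      ← mul_assoc, X_mul_C]

theorem toPolynomial_mul (l m : List R) :
    toPolynomial (mul l m) = toPolynomial l * toPolynomial m := by
  induction l with
  | nil => simp [mul]
  | cons a l ih =>
    rw [mul, toPolynomial_add, toPolynomial_map_mul, toPolynomial_cons, ih, map_zero, zero_add,
      toPolynomial_cons, add_mul, mul_assoc]

theorem toPolynomial_pow (l : List R) (n : ℕ) : toPolynomial (pow l n) = toPolynomial l ^ n := by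
  induction n with
  | zero => simp [pow]
  | succ n ih => rw [pow, toPolynomial_mul, ih, pow_succ]

theorem coeff_toPolynomial (l : List R) (k : ℕ) : (toPolynomial l).coeff k = l.getD k 0 := by
  induction l generalizing k with
  | nil => simp
  | cons a l ih => cases k <;> simp [Polynomial.coeff_C, ih]

end CoeffList

namespace Polynomial

theorem coeff_toLaurent_natCast {R : Type*} [Semiring R] (f : R[X]) (n : ℕ) :
    (toLaurent f).coeff n = f.coeff n := by
  rw [coeff_toLaurent]
  exact Finsupp.mapDomain_apply Nat.castEmbedding.injective _ n

theorem coeff_zero_pow_toLaurent_mul_T_neg {R : Type*} [CommSemiring R] (f : R[X]) (d n : ℕ) :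
    ((toLaurent f * T (-d)) ^ n).coeff 0 = (f ^ n).coeff (d * n) := by
  rw [mul_pow, T_pow, ← map_pow, T, AddMonoidAlgebra.coeff_mul_single_apply, mul_one,
    ← coeff_toLaurent_natCast]
  congr 1
  push_cast
  ring

end Polynomial

theorem P_eq : P = toLaurent (CoeffList.toPolynomial [2, 1, 1, 1, 1]) * T (-2) := by
  simp only [CoeffList.toPolynomial_cons, CoeffList.toPolynomial_nil, mul_zero, add_zero,
    map_add, map_mul, toLaurent_C, toLaurent_X, P]
  simp only [map_one, map_ofNat, mul_one, add_mul, mul_add, ← T_add]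
  norm_num [T_zero]
  abel

theorem stmt7 :
    (∀ n : ℕ, n < 3 ^ 2 → (P ^ n).coeff 0 ≠ 0) ∧ ∃ n : ℕ, (P ^ n).coeff 0 = 0 := by
  have hct (n : ℕ) : (P ^ n).coeff 0 = (CoeffList.pow [2, 1, 1, 1, 1] n).getD (2 * n) 0 := by
    rw [P_eq, ← CoeffList.coeff_toPolynomial, CoeffList.toPolynomial_pow]
    exact coeff_zero_pow_toLaurent_mul_T_neg _ 2 n
  simp only [hct]
  exact ⟨by decide +kernel, 23, by decide +kernel⟩
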